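/- Let Q ∈ P^G be a Bayesian network over an arbitrary directed acyclic graph G on n vertices, let Γ^L be a class of bounded measurable functions on X, let i ∈ V, and let P_{i∪Pa(i)} be any probability measure on X_{i∪Pa(i)}. With P̃ = Q_{V^{(i−1)}|Pa(i)} ⊗ P_{i∪Pa(i)} ⊗ ∏_{j=i+1}^n Q_{j|Pa(j)}, the following data-processing-type inequality holds for the Γ-IPM: W^{I_{i,Pa(i)}[Γ^L]}( Q_{i∪Pa(i)}, P_{i∪Pa(i)} ) ≥ W^{Γ^L}( Q, P̃ ). -/

import Mathlib

open MeasureTheory ProbabilityTheory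

namespace GiGAN

variable {n : ℕ}

/-- Restriction of a configuration to the coordinates in `A`. -/
def restr (X : Fin n → Type*) (A : Finset (Fin n)) (x : ∀ j, X j) : ∀ j : A, X j :=
  fun j => x j

/-- Glue a configuration on `A` with one on `Aᶜ` to a full configuration. -/
def glue (X : Fin n → Type*) (A : Finset (Fin n))
    (p : (∀ j : A, X j) × (∀ j : (Aᶜ : Finset (Fin n)), X j)) : ∀ j, X j :=
  fun j => if h : j ∈ A then p.1 ⟨j, h⟩ else p.2 ⟨j, Finset.mem_compl.mpr h⟩

/-- The family of vertex `i` : the vertex together with its parents. -/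
def fam (Pa : Fin n → Finset (Fin n)) (i : Fin n) : Finset (Fin n) := insert i (Pa i)

variable (X : Fin n → Type*) [∀ i, MeasurableSpace (X i)]

/-- Marginal of a measure on the coordinates in `A`. -/
noncomputable def marg (A : Finset (Fin n)) (Q : Measure (∀ j, X j)) :
    Measure (∀ j : A, X j) := Q.map (restr X A)

/-- Hybrid measure: the coordinates in `A` are distributed according to `Pfam` and the
remaining coordinates according to the conditional kernel `K`. -/
noncomputable def hyb (A : Finset (Fin n)) (Pfam : Measure (∀ j : A, X j))
    (K : Kernel (∀ j : A, X j) (∀ j : (Aᶜ : Finset (Fin n)), X j)) :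
    Measure (∀ j, X j) :=
  Pfam.bind fun u => (K u).map fun w => glue X A (u, w)

/-- The conditional expectation operator `I_{i,Pa(i)}`, integrating out all coordinates
outside `A = i ∪ Pa(i)` against the conditional kernel `K`. -/
noncomputable def Iop (A : Finset (Fin n))
    (K : Kernel (∀ j : A, X j) (∀ j : (Aᶜ : Finset (Fin n)), X j))
    (γ : (∀ j, X j) → ℝ) (u : ∀ j : A, X j) : ℝ :=
  ∫ w, γ (glue X A (u, w)) ∂(K u)

/-- Resample coordinate `i` from the conditional kernel given its parents. -/
noncomputable def resampleFun (Pa : Fin n → Finset (Fin n)) (i : Fin n)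
    (κ : Kernel (∀ j : (Pa i), X j) (X i)) (x : ∀ j, X j) : Measure (∀ j, X j) :=
  (κ (restr X (Pa i) x)).map fun xi => Function.update x i xi

/-- The joint law of the Bayesian network with conditional probability distributions `κ`,
obtained by ancestral sampling of the coordinates in (topological) order. -/
noncomputable def bnJoint (Pa : Fin n → Finset (Fin n))
    (κ : ∀ i, Kernel (∀ j : (Pa i), X j) (X i)) (x₀ : ∀ j, X j) :
    Measure (∀ j, X j) :=
  (List.finRange n).foldl (fun μ i => μ.bind (resampleFun X Pa i (κ i))) (Measure.dirac x₀)

/-- `P ∈ 𝒫^G` : `P` factorizes according to the DAG `G` given by the parent map `Pa`. -/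
def MemPG (Pa : Fin n → Finset (Fin n)) (P : Measure (∀ j, X j)) : Prop :=
  IsProbabilityMeasure P ∧
    ∃ κ : ∀ i, Kernel (∀ j : (Pa i), X j) (X i),
      (∀ i, IsMarkovKernel (κ i)) ∧ ∀ x₀, P = bnJoint X Pa κ x₀

/-- `Γ^L = {L·γ : γ ∈ Γ}`. -/
def scaleC {Y : Type*} (L : ℝ) (Γ : Set (Y → ℝ)) : Set (Y → ℝ) :=
  (fun γ => fun y => L * γ y) '' Γ

/-- A class of bounded measurable real-valued functions. -/
def BddMeasClass {Y : Type*} [MeasurableSpace Y] (Γ : Set (Y → ℝ)) : Prop :=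
  ∀ γ ∈ Γ, Measurable γ ∧ ∃ M, ∀ y, |γ y| ≤ M

/-- Legendre–Fenchel transform of `f : [0,∞) → ℝ`. -/
noncomputable def conj (f : ℝ → ℝ) (s : ℝ) : ℝ :=
  sSup {y | ∃ t : ℝ, 0 ≤ t ∧ y = s * t - f t}

/-- The `(f,Γ)`-divergence, in its variational form, where `fs = f*` is the
Legendre–Fenchel transform of `f`. -/
noncomputable def DfGamma {Y : Type*} [MeasurableSpace Y] (fs : ℝ → ℝ)
    (Γ : Set (Y → ℝ)) (Q P : Measure Y) : ℝ :=
  ⨆ γ ∈ Γ, (∫ y, γ y ∂Q - ⨅ ν : ℝ, (ν + ∫ y, fs (γ y - ν) ∂P))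

/-- The `Γ`-integral probability metric. -/
noncomputable def IPM {Y : Type*} [MeasurableSpace Y] (Γ : Set (Y → ℝ))
    (Q P : Measure Y) : ℝ :=
  ⨆ γ ∈ Γ, (∫ y, γ y ∂Q - ∫ y, γ y ∂P)


/-! Both `Q` and `P̃` glue their law on the family `i ∪ Pa(i)` to the same conditional kernel
`K` for the remaining coordinates, and integrating out those coordinates gives
`∫ γ d(hyb P K) = ∫ I[γ] dP`. So the term of `W^{Γ^L}(Q, P̃)` indexed by `γ` equals the term of
`W^{I[Γ^L]}(Q_{i∪Pa(i)}, P_{i∪Pa(i)})` indexed by `I[γ]`. -/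

theorem _root_.Real.biSup_comp_le_biSup_image {ι ι' : Type*} {s : Set ι} (f : ι → ι')
    (G : ι' → ℝ) (hG : ∃ y, 0 ≤ G y) :
    ⨆ x ∈ s, G (f x) ≤ ⨆ y ∈ f '' s, G y := by
  set g : ι' → ℝ := fun y => ⨆ _ : y ∈ f '' s, G y
  have hg : ∀ x ∈ s, g (f x) = G (f x) := fun x hx => ciSup_pos (Set.mem_image_of_mem f hx)
  -- Real suprema are `0` when empty or unbounded, so both sides must be compared with `0`.
  have hg_nonneg : 0 ≤ ⨆ y, g y :=
    let ⟨y, hy⟩ := hG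
    Real.iSup_nonneg' ⟨y, Real.iSup_nonneg fun _ => hy⟩
  by_cases hbdd : BddAbove (Set.range g)
  · exact Real.iSup_le (fun x => Real.iSup_le
      (fun hx => hg x hx ▸ le_ciSup hbdd (f x)) hg_nonneg) hg_nonneg
  · rw [Real.iSup_of_not_bddAbove hbdd]
    refine (Real.iSup_of_not_bddAbove fun ⟨b, hb⟩ => hbdd ⟨max b 0, ?_⟩).le
    rintro _ ⟨y, rfl⟩
    by_cases hy : y ∈ f '' s
    · obtain ⟨x, hx, rfl⟩ := hy
      have hxb := hb (Set.mem_range_self x)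
      rw [ciSup_pos hx] at hxb
      exact hg x hx ▸ le_max_of_le_left hxb
    · simp only [g, ciSup_neg hy, Real.sSup_empty, le_max_right]

theorem BddMeasClass.integrable {Y : Type*} [MeasurableSpace Y] {Γ : Set (Y → ℝ)}
    (hΓ : BddMeasClass Γ) {γ : Y → ℝ} (hγ : γ ∈ Γ) (μ : Measure Y) [IsFiniteMeasure μ] :
    Integrable γ μ :=
  let ⟨hmeas, M, hM⟩ := hΓ γ hγ
  .of_bound hmeas.aestronglyMeasurable M
    (ae_of_all _ fun y => (Real.norm_eq_abs _).le.trans (hM y))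

theorem measurable_glue (A : Finset (Fin n)) : Measurable (glue X A) := by
  refine measurable_pi_iff.2 fun j => ?_
  by_cases hj : j ∈ A
  · simp only [glue, dif_pos hj]
    exact (measurable_pi_apply _).comp measurable_fst
  · simp only [glue, dif_neg hj]
    exact (measurable_pi_apply _).comp measurable_snd

instance (A : Finset (Fin n)) (Q : Measure (∀ j, X j)) [IsFiniteMeasure Q] :
    IsFiniteMeasure (marg X A Q) :=
  Measure.isFiniteMeasure_map _ _

section Hybrid

variable {A : Finset (Fin n)} (P : Measure (∀ j : A, X j))
  (K : Kernel (∀ j : A, X j) (∀ j : (Aᶜ : Finset (Fin n)), X j))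

theorem hyb_eq_map_compProd [SFinite P] [IsSFiniteKernel K] :
    hyb X A P K = (P ⊗ₘ K).map (glue X A) := by
  have hglue := measurable_glue X A
  have hkernel : (fun u => (K u).map fun w => glue X A (u, w)) =
      ⇑((Kernel.id ×ₖ K).map (glue X A)) := by
    funext u
    rw [Kernel.map_apply _ hglue, Kernel.prod_apply, Kernel.id_apply, Measure.dirac_prod,
      Measure.map_map hglue measurable_prodMk_left]
    rfl
  rw [hyb, hkernel, Measure.compProd_eq_comp_prod, Measure.map_comp _ _ hglue]

instance [IsFiniteMeasure P] [IsFiniteKernel K] : IsFiniteMeasure (hyb X A P K) := by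
  rw [hyb_eq_map_compProd]
  infer_instance

theorem integral_hyb [SFinite P] [IsSFiniteKernel K] {γ : (∀ j, X j) → ℝ}
    (hγ : Integrable γ (hyb X A P K)) :
    ∫ x, γ x ∂(hyb X A P K) = ∫ u, Iop X A K γ u ∂P := by
  have hglue := measurable_glue X A
  rw [hyb_eq_map_compProd] at hγ ⊢
  rw [integral_map hglue.aemeasurable hγ.aestronglyMeasurable]
  exact Measure.integral_compProd (hγ.comp_measurable hglue)

end Hybrid

theorem Iop_data_processing_IPM
    (Pa : Fin n → Finset (Fin n))
    (ΓL : Set ((∀ j, X j) → ℝ)) (hΓL : BddMeasClass ΓL)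
    (Q : Measure (∀ j, X j)) (hQ : MemPG X Pa Q)
    (K : ∀ i : Fin n,
      Kernel (∀ j : fam Pa i, X j) (∀ j : ((fam Pa i)ᶜ : Finset (Fin n)), X j))
    (hK : ∀ i, IsMarkovKernel (K i))
    (hdisint : ∀ i, Q = hyb X (fam Pa i) (marg X (fam Pa i) Q) (K i))
    (i : Fin n)
    (Pfam : Measure (∀ j : fam Pa i, X j)) (hPfam : IsProbabilityMeasure Pfam) :
    IPM (Iop X (fam Pa i) (K i) '' ΓL) (marg X (fam Pa i) Q) Pfam ≥
      IPM ΓL Q (hyb X (fam Pa i) Pfam (K i)) := by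
  have := hQ.1
  have := hK i
  have hdiff : ∀ γ ∈ ΓL,
      ∫ x, γ x ∂Q - ∫ x, γ x ∂(hyb X (fam Pa i) Pfam (K i)) =
        ∫ u, Iop X (fam Pa i) (K i) γ u ∂(marg X (fam Pa i) Q) -
          ∫ u, Iop X (fam Pa i) (K i) γ u ∂Pfam := by
    intro γ hγ
    have hQ_int : ∫ x, γ x ∂Q = ∫ u, Iop X (fam Pa i) (K i) γ u ∂(marg X (fam Pa i) Q) := by
      conv_lhs => rw [hdisint i]
      exact integral_hyb X _ _ (hdisint i ▸ hΓL.integrable hγ Q)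
    rw [hQ_int, integral_hyb X _ _ (hΓL.integrable hγ _)]
  unfold IPM
  rw [iSup_congr fun γ => iSup_congr fun hγ => hdiff γ hγ]
  exact Real.biSup_comp_le_biSup_image _
    (fun γ : (∀ j : fam Pa i, X j) → ℝ => ∫ u, γ u ∂(marg X (fam Pa i) Q) - ∫ u, γ u ∂Pfam)
    ⟨0, by simp⟩

end GiGAN
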